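/- arXiv:2012.14490 — 4 statements merged into one kernel-verified Lean document; each statement's English description precedes it below -/
import Mathlib

section
/- There do not exist bounded linear operators Q and P on a nonzero complex Hilbert space H such that Q∘P - P∘Q = i·𝟙, where 𝟙 is the identity operator. -/
/-!
If `a * b - b * a = 1` in a real normed algebra, then `a * b ^ (n + 1) - b ^ (n + 1) * a = (n + 1) • b ^ n`,
so `(n + 1) ‖b ^ n‖ ≤ 2 ‖a‖ ‖b‖ ‖b ^ n‖`. No power of `b` vanishes (a vanishing power would force the
previous one to vanish, down to `b ^ 0 = 1`), hence `n + 1 ≤ 2 ‖a‖ ‖b‖` for every `n`, which is absurd.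
Rescaling `Q` by `-i` turns the canonical commutation relation into `a * b - b * a = 1`.
-/

section Ring

variable {R : Type*} [Ring R] {a b : R}

theorem mul_pow_succ_sub_pow_succ_mul (h : a * b - b * a = 1) (n : ℕ) :
    a * b ^ (n + 1) - b ^ (n + 1) * a = (n + 1) • b ^ n := by
  induction n with
  | zero => simpa using h
  | succ n ih =>
    calc a * b ^ (n + 2) - b ^ (n + 2) * a
        = (a * b ^ (n + 1) - b ^ (n + 1) * a) * b + b ^ (n + 1) * (a * b - b * a) := by
          simp only [pow_succ]; noncomm_ring
      _ = (n + 2) • b ^ (n + 1) := by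
          rw [ih, h, smul_mul_assoc, ← pow_succ, mul_one, ← succ_nsmul]

end Ring

section NormedRing

variable {R : Type*} [NormedRing R] [NormedSpace ℝ R] {a b : R}

theorem pow_eq_zero_of_pow_succ_eq_zero (h : a * b - b * a = 1) {n : ℕ} (hn : b ^ (n + 1) = 0) :
    b ^ n = 0 := by
  have hzero : (n + 1) • b ^ n = 0 := by
    rw [← mul_pow_succ_sub_pow_succ_mul h, hn, mul_zero, zero_mul, sub_zero]
  have hnorm : (n + 1) • ‖b ^ n‖ = 0 := by rw [← RCLike.norm_nsmul ℝ, hzero, norm_zero]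
  exact norm_eq_zero.mp ((nsmul_eq_zero_iff.mp hnorm).resolve_right n.succ_ne_zero)

theorem pow_ne_zero_of_mul_sub_mul_eq_one [Nontrivial R] (h : a * b - b * a = 1) (n : ℕ) :
    b ^ n ≠ 0 := by
  induction n with
  | zero => simp
  | succ n ih => exact fun hn => ih (pow_eq_zero_of_pow_succ_eq_zero h hn)

theorem succ_mul_norm_pow_le (h : a * b - b * a = 1) (n : ℕ) :
    (n + 1) * ‖b ^ n‖ ≤ 2 * ‖a‖ * ‖b‖ * ‖b ^ n‖ := by
  have hpow : ‖b ^ (n + 1)‖ ≤ ‖b‖ * ‖b ^ n‖ := by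
    rw [pow_succ']; exact norm_mul_le _ _
  calc (n + 1) * ‖b ^ n‖ = ‖a * b ^ (n + 1) - b ^ (n + 1) * a‖ := by
        rw [mul_pow_succ_sub_pow_succ_mul h, RCLike.norm_nsmul ℝ, nsmul_eq_mul]; push_cast; ring
    _ ≤ ‖a‖ * ‖b ^ (n + 1)‖ + ‖b ^ (n + 1)‖ * ‖a‖ :=
        (norm_sub_le _ _).trans (add_le_add (norm_mul_le _ _) (norm_mul_le _ _))
    _ = 2 * ‖a‖ * ‖b ^ (n + 1)‖ := by ring
    _ ≤ 2 * ‖a‖ * (‖b‖ * ‖b ^ n‖) := by gcongr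
    _ = 2 * ‖a‖ * ‖b‖ * ‖b ^ n‖ := by ring

theorem mul_sub_mul_ne_one [Nontrivial R] (a b : R) : a * b - b * a ≠ 1 := by
  intro h
  obtain ⟨n, hn⟩ := exists_nat_gt (2 * ‖a‖ * ‖b‖)
  have hpos : 0 < ‖b ^ n‖ := norm_pos_iff.mpr (pow_ne_zero_of_mul_sub_mul_eq_one h n)
  have hbound := le_of_mul_le_mul_right (succ_mul_norm_pow_le h n) hpos
  linarith

end NormedRing

theorem wintner_wielandt_general
    {H : Type*} [NormedAddCommGroup H] [InnerProductSpace ℂ H]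
    [Nontrivial H] :
    ¬ ∃ Q P : H →L[ℂ] H, Q.comp P - P.comp Q = Complex.I • (1 : H →L[ℂ] H) := by
  rintro ⟨Q, P, hQP⟩
  apply mul_sub_mul_ne_one (-Complex.I • Q) P
  calc (-Complex.I • Q) * P - P * (-Complex.I • Q) = -Complex.I • (Q.comp P - P.comp Q) := by
        rw [smul_mul_assoc, mul_smul_comm, ← smul_sub]; rfl
    _ = 1 := by rw [hQP, smul_smul, neg_mul, Complex.I_mul_I, neg_neg, one_smul]

/-- **Wintner–Wielandt theorem**: there are no bounded linear operators `Q`, `P` on a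
nonzero complex Hilbert space satisfying the canonical commutation relation
`Q ∘ P - P ∘ Q = i • 𝟙`. -/
theorem wintner_wielandt
    {H : Type*} [NormedAddCommGroup H] [InnerProductSpace ℂ H] [CompleteSpace H]
    [Nontrivial H] :
    ¬ ∃ Q P : H →L[ℂ] H, Q.comp P - P.comp Q = Complex.I • (1 : H →L[ℂ] H) :=
  wintner_wielandt_general
end

section
/- Let X and D be bounded linear operators on a complex Hilbert space with ‖X‖ = 1/2 and ‖X∘D - D∘X - 𝟙‖ ≤ ε for some ε > 0. Then ‖D‖ ≥ log(1/ε). -/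
open Real Finset
open scoped Nat

/-!
Write `x * d - d * x = 1 + t`. The Leibniz rule gives
`x ^ (n + 1) * d - d * x ^ (n + 1) = (n + 1) • x ^ n + s` with `‖s‖ ≤ (n + 1) ‖t‖ ‖x‖ ^ n`, so for
`‖x‖ ≤ 1/2` the numbers `βₙ = 2 ^ n ‖x ^ n‖ ≤ 1` satisfy `(n + 1) βₙ ≤ ‖d‖ βₙ₊₁ + (n + 1) ‖t‖`.
Multiplying by `‖d‖ ^ n / (n + 1)!` and telescoping from `β₀ = 1` gives
`1 ≤ ‖d‖ ^ n / n! + ‖t‖ exp ‖d‖`, and letting `n → ∞` yields `1 ≤ ‖t‖ exp ‖d‖`.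
-/

theorem le_pow_div_factorial_mul_add_mul_sum {β : ℕ → ℝ} {d ε : ℝ} (hd : 0 ≤ d)
    (h : ∀ n : ℕ, (n + 1) * β n ≤ d * β (n + 1) + (n + 1) * ε) (n : ℕ) :
    β 0 ≤ d ^ n / n ! * β n + ε * ∑ k ∈ range n, d ^ k / k ! := by
  induction n with
  | zero => simp
  | succ n ih =>
    have hfact : ((n + 1)! : ℝ) = (n + 1) * n ! := by push_cast [Nat.factorial_succ]; ring
    have hstep : d ^ n / n ! * β n ≤ d ^ (n + 1) / (n + 1)! * β (n + 1) + ε * (d ^ n / n !) := by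
      calc d ^ n / n ! * β n = d ^ n / (n + 1)! * ((n + 1) * β n) := by
            rw [hfact]; field_simp
        _ ≤ d ^ n / (n + 1)! * (d * β (n + 1) + (n + 1) * ε) := by gcongr; exact h n
        _ = _ := by rw [hfact]; field_simp; ring
    rw [sum_range_succ]
    linarith

theorem one_le_mul_exp_of_succ_mul_le {β : ℕ → ℝ} {d ε : ℝ} (hd : 0 ≤ d) (hε : 0 ≤ ε)
    (h0 : β 0 = 1) (hβ : ∀ n, β n ≤ 1)
    (h : ∀ n : ℕ, (n + 1) * β n ≤ d * β (n + 1) + (n + 1) * ε) :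
    1 ≤ ε * exp d := by
  have hbound (n : ℕ) : 1 - ε * exp d ≤ d ^ n / n ! := by
    have := le_pow_div_factorial_mul_add_mul_sum hd h n
    have : d ^ n / n ! * β n ≤ d ^ n / n ! := mul_le_of_le_one_right (by positivity) (hβ n)
    have : ε * ∑ k ∈ range n, d ^ k / k ! ≤ ε * exp d :=
      mul_le_mul_of_nonneg_left (sum_le_exp_of_nonneg hd n) hε
    linarith
  have := ge_of_tendsto' (FloorSemiring.tendsto_pow_div_factorial_atTop d) hbound
  linarith

theorem pow_succ_mul_sub_mul_pow_succ {R : Type*} [Ring R] (x d : R) (n : ℕ) :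
    x ^ (n + 1) * d - d * x ^ (n + 1) = x ^ n * (x * d - d * x) + (x ^ n * d - d * x ^ n) * x := by
  rw [pow_succ]
  noncomm_ring

section NormedRing

variable {A : Type*} [NormedRing A]

theorem norm_pow_succ_mul_sub_mul_pow_succ_sub_nsmul_le (x d : A) (n : ℕ) :
    ‖x ^ (n + 1) * d - d * x ^ (n + 1) - (n + 1) • x ^ n‖ ≤
      (n + 1) * ‖x * d - d * x - 1‖ * ‖x‖ ^ n := by
  set t := x * d - d * x - 1
  induction n with
  | zero => simp [t]
  | succ n ih =>
    have hsplit : x ^ (n + 2) * d - d * x ^ (n + 2) - (n + 2) • x ^ (n + 1) =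
        x ^ (n + 1) * t + (x ^ (n + 1) * d - d * x ^ (n + 1) - (n + 1) • x ^ n) * x := by
      rw [pow_succ_mul_sub_mul_pow_succ, succ_nsmul, sub_mul _ ((n + 1) • x ^ n), smul_mul_assoc,
        ← pow_succ]
      simp only [t]
      noncomm_ring
    calc _ = ‖x ^ (n + 1) * t + (x ^ (n + 1) * d - d * x ^ (n + 1) - (n + 1) • x ^ n) * x‖ := by
          rw [hsplit]
      _ ≤ ‖x‖ ^ (n + 1) * ‖t‖ + (n + 1) * ‖t‖ * ‖x‖ ^ n * ‖x‖ := by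
          refine (norm_add_le _ _).trans (add_le_add ?_ ?_)
          · exact (norm_mul_le _ _).trans
              (mul_le_mul_of_nonneg_right (norm_pow_le' x n.succ_pos) (norm_nonneg t))
          · exact (norm_mul_le _ _).trans (mul_le_mul_of_nonneg_right ih (norm_nonneg x))
      _ = (↑(n + 1) + 1) * ‖t‖ * ‖x‖ ^ (n + 1) := by push_cast; ring

theorem succ_mul_norm_pow_le_s3 [NormedSpace ℝ A] (x d : A) (n : ℕ) :
    (n + 1) * ‖x ^ n‖ ≤ 2 * ‖d‖ * ‖x ^ (n + 1)‖ + (n + 1) * ‖x * d - d * x - 1‖ * ‖x‖ ^ n := by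
  set y := x ^ (n + 1)
  calc (n + 1) * ‖x ^ n‖ = ‖(n + 1) • x ^ n‖ := by
        rw [RCLike.norm_nsmul ℝ, nsmul_eq_mul]; push_cast; ring
    _ ≤ ‖y * d - d * y‖ + ‖y * d - d * y - (n + 1) • x ^ n‖ := by
        rw [norm_sub_rev (y * d - d * y)]; exact norm_le_norm_add_norm_sub' _ _
    _ ≤ ‖y‖ * ‖d‖ + ‖d‖ * ‖y‖ + (n + 1) * ‖x * d - d * x - 1‖ * ‖x‖ ^ n := by
        gcongr
        · exact (norm_sub_le _ _).trans (add_le_add (norm_mul_le _ _) (norm_mul_le _ _))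
        · exact norm_pow_succ_mul_sub_mul_pow_succ_sub_nsmul_le x d n
    _ = _ := by ring

theorem one_le_norm_mul_sub_mul_sub_one_mul_exp [NormOneClass A] [NormedSpace ℝ A] {x : A}
    (hx : ‖x‖ ≤ 1 / 2) (d : A) :
    1 ≤ ‖x * d - d * x - 1‖ * exp ‖d‖ := by
  set ε := ‖x * d - d * x - 1‖
  have hdecay (n : ℕ) : 2 ^ n * ‖x‖ ^ n ≤ 1 := by
    rw [← mul_pow]
    exact pow_le_one₀ (by positivity) (by linarith)
  refine one_le_mul_exp_of_succ_mul_le (β := fun n ↦ 2 ^ n * ‖x ^ n‖) (norm_nonneg d)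
    (norm_nonneg _) (by simp) (fun n ↦ ?_) (fun n ↦ ?_)
  · exact (mul_le_mul_of_nonneg_left (norm_pow_le x n) (by positivity)).trans (hdecay n)
  · calc (n + 1) * (2 ^ n * ‖x ^ n‖) = 2 ^ n * ((n + 1) * ‖x ^ n‖) := by ring
      _ ≤ 2 ^ n * (2 * ‖d‖ * ‖x ^ (n + 1)‖ + (n + 1) * ε * ‖x‖ ^ n) := by
          gcongr; exact succ_mul_norm_pow_le_s3 x d n
      _ = ‖d‖ * (2 ^ (n + 1) * ‖x ^ (n + 1)‖) + (n + 1) * ε * (2 ^ n * ‖x‖ ^ n) := by ring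
      _ ≤ ‖d‖ * (2 ^ (n + 1) * ‖x ^ (n + 1)‖) + (n + 1) * ε :=
          add_le_add le_rfl (mul_le_of_le_one_right (by positivity) (hdecay n))

end NormedRing

theorem popa_estimate_general
    {H : Type*} [NormedAddCommGroup H] [InnerProductSpace ℂ H]
    (X D : H →L[ℂ] H) (ε : ℝ)
    (hX : ‖X‖ = 1 / 2)
    (hcomm : ‖X * D - D * X - 1‖ ≤ ε) :
    Real.log (1 / ε) ≤ ‖D‖ := by
  have : Nontrivial H := by
    by_contra! h
    simp [Subsingleton.elim X 0] at hX
  have key : 1 ≤ ε * exp ‖D‖ := (one_le_norm_mul_sub_mul_sub_one_mul_exp hX.le D).trans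
    (mul_le_mul_of_nonneg_right hcomm (exp_nonneg _))
  have hε : 0 < ε := pos_of_mul_pos_left (by linarith) (exp_nonneg _)
  rw [log_le_iff_le_exp (by positivity), div_le_iff₀ hε]
  linarith

/-- **Popa's estimate**: if `X`, `D` are bounded operators on a complex Hilbert space with
`‖X‖ = 1/2` and `‖X∘D - D∘X - 𝟙‖ ≤ ε` for some `ε > 0`, then `‖D‖ ≥ log (1/ε)`. -/
theorem popa_estimate
    {H : Type*} [NormedAddCommGroup H] [InnerProductSpace ℂ H] [CompleteSpace H]
    (X D : H →L[ℂ] H) (ε : ℝ) (hε : 0 < ε)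
    (hX : ‖X‖ = 1 / 2)
    (hcomm : ‖X * D - D * X - 1‖ ≤ ε) :
    Real.log (1 / ε) ≤ ‖D‖ :=
  popa_estimate_general X D ε hX hcomm
end

section
/- Let A be a closed, densely defined, hermitian operator on a complex Hilbert space H such that the domain of A contains an orthonormal basis (ψₙ) of H consisting of eigenvectors of A. Then A is self-adjoint. -/
open scoped InnerProductSpace ComplexConjugate

/-!
Symmetry gives `A ≤ A†` and forces the eigenvalues `λₙ` to be real. Conversely, for `y` in the
domain of `A†` the coefficients of `A† y` in the eigenbasis are `λₙ ⟪ψₙ, y⟫`. The partial sums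
of the expansion of `y` lie in the domain of `A`, and `A` maps them to the partial sums of the
expansion of `A† y`, so closedness of `A` puts `(y, A† y)` in its graph, i.e. `A† ≤ A`.
-/

namespace LinearPMap

variable {𝕜 E : Type*} [RCLike 𝕜] [NormedAddCommGroup E] [InnerProductSpace 𝕜 E]

theorem conj_eigenvalue_eq_self_of_symmetric {A : E →ₗ.[𝕜] E}
    (hA : ∀ x y : A.domain, ⟪(x : E), A y⟫_𝕜 = ⟪A x, (y : E)⟫_𝕜)
    {x : A.domain} (hx : (x : E) ≠ 0) {μ : 𝕜} (hAx : A x = μ • (x : E)) : conj μ = μ := by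
  have h := hA x x
  rw [hAx, inner_smul_right, inner_smul_left] at h
  exact (mul_right_cancel₀ (inner_self_ne_zero.2 hx) h).symm

variable {ι : Type*} {A : E →ₗ.[𝕜] E} (b : HilbertBasis ι 𝕜 E) (hb : ∀ i, b i ∈ A.domain)
  {μ : ι → 𝕜}

include hb in
theorem IsClosed.mem_graph_of_repr_eq_mul (hA : A.IsClosed)
    (hAb : ∀ i, A ⟨b i, hb i⟩ = μ i • b i) {x z : E}
    (hxz : ∀ i, b.repr z i = μ i * b.repr x i) : (x, z) ∈ A.graph := by
  have hsum : HasSum (fun i ↦ b.repr x i • ((b i, μ i • b i) : E × E)) (x, z) := by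
    simp only [Prod.smul_mk, smul_smul, mul_comm _ (μ _), ← hxz]
    exact (b.hasSum_repr x).prodMk (b.hasSum_repr z)
  refine hA.mem_of_tendsto hsum (Filter.Eventually.of_forall fun s ↦ ?_)
  refine A.graph.sum_mem fun i _ ↦ A.graph.smul_mem _ ?_
  simpa [hAb i] using A.mem_graph ⟨b i, hb i⟩

theorem repr_adjoint_apply_eq_conj_mul [CompleteSpace E] (hdense : Dense (A.domain : Set E))
    (hAb : ∀ i, A ⟨b i, hb i⟩ = μ i • b i) (y : A†.domain) (i : ι) :
    b.repr (A† y) i = conj (μ i) * b.repr y i := by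
  have h := adjoint_isFormalAdjoint hdense y ⟨b i, hb i⟩
  rw [hAb, inner_smul_right] at h
  rw [b.repr_apply_apply, b.repr_apply_apply, ← inner_conj_symm, h, map_mul, inner_conj_symm]

end LinearPMap

open LinearPMap in
/-- A closed, densely defined, hermitian (symmetric) operator on a complex separable
Hilbert space whose domain contains an orthonormal (Hilbert) basis of eigenvectors is
self-adjoint. -/
theorem closed_symmetric_with_eigenbasis_isSelfAdjoint
    {H : Type*} [NormedAddCommGroup H] [InnerProductSpace ℂ H] [CompleteSpace H]
    (A : H →ₗ.[ℂ] H)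
    (hdense : Dense (A.domain : Set H))
    (hclosed : A.IsClosed)
    (hsymm : ∀ ψ φ : A.domain, ⟪(ψ : H), A φ⟫_ℂ = ⟪A ψ, (φ : H)⟫_ℂ)
    (b : HilbertBasis ℕ ℂ H) (hb : ∀ n, b n ∈ A.domain)
    (lam : ℕ → ℂ)
    (heig : ∀ n, A ⟨b n, hb n⟩ = lam n • b n) :
    A.adjoint = A := by
  have hreal (n : ℕ) : conj (lam n) = lam n :=
    conj_eigenvalue_eq_self_of_symmetric hsymm (b.orthonormal.ne_zero n) (heig n)
  refine le_antisymm (le_of_le_graph ?_)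
    (IsFormalAdjoint.le_adjoint hdense fun x y ↦ (hsymm x y).symm)
  rintro ⟨x, z⟩ hy
  obtain ⟨y, rfl, rfl⟩ := (mem_graph_iff _).1 hy
  exact hclosed.mem_graph_of_repr_eq_mul b hb heig fun n ↦ by
    rw [repr_adjoint_apply_eq_conj_mul b hb hdense heig, hreal]
end

section
/- If A is a closed, densely defined hermitian operator on a complex Hilbert space whose domain contains an orthonormal basis of eigenvectors, then the range of A + i·𝟙 is all of H. -/
open scoped InnerProductSpace
open Filter

/-!
Expand `η = ∑ ηₙ bₙ` in the eigenbasis. The only candidate solution of `(A + σ) ψ = η` is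
`ψ = ∑ ηₙ / (λₙ + σ) bₙ`, and since `|λₙ + σ| ≥ 1` for `σ = ±i` and real `λₙ`, both this series
and `∑ λₙ ηₙ / (λₙ + σ) bₙ` have square-summable coefficients. Their partial sums lie in the
graph of `A`, which is closed, so `ψ ∈ D(A)` and `A ψ` is the second series.
-/

theorem LinearPMap.IsClosed.mem_graph_of_hasSum {R E F ι : Type*} [CommRing R]
    [AddCommGroup E] [Module R E] [TopologicalSpace E]
    [AddCommGroup F] [Module R F] [TopologicalSpace F]
    {A : E →ₗ.[R] F} (hA : A.IsClosed) {v : ι → E} {w : ι → F} {x : E} {y : F}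
    (hvw : ∀ i, (v i, w i) ∈ A.graph) (hx : HasSum v x) (hy : HasSum w y) :
    (x, y) ∈ A.graph := by
  refine hA.mem_of_tendsto (hx.prodMk_nhds hy) (Eventually.of_forall fun s => ?_)
  rw [prod_mk_sum]
  exact Submodule.sum_mem _ fun i _ => hvw i

section HilbertBasis

variable {ι 𝕜 E : Type*} [RCLike 𝕜] [NormedAddCommGroup E] [InnerProductSpace 𝕜 E]

theorem HilbertBasis.summable_mul_repr_smul (b : HilbertBasis ι 𝕜 E) (η : E) {d : ι → 𝕜}
    {C : ℝ} (hd : ∀ i, ‖d i‖ ≤ C) : Summable fun i => (d i * b.repr η i) • b i := by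
  have hmem : Memℓp (fun i => d i * b.repr η i) 2 :=
    ((b.repr η).prop.const_mul (C : 𝕜)).mono' fun i => by
      rw [norm_mul, norm_mul, RCLike.norm_ofReal]
      gcongr
      exact (hd i).trans (le_abs_self C)
  exact (b.hasSum_repr_symm ⟨_, hmem⟩).summable

theorem LinearPMap.mem_graph_of_eigenbasis {A : E →ₗ.[𝕜] E} (b : HilbertBasis ι 𝕜 E)
    (hb : ∀ i, b i ∈ A.domain) (μ : ι → 𝕜) (heig : ∀ i, A ⟨b i, hb i⟩ = μ i • b i) (c : 𝕜)
    (i : ι) : (c • b i, (μ i * c) • b i) ∈ A.graph := by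
  refine (LinearPMap.mem_graph_iff A).2 ⟨c • ⟨b i, hb i⟩, rfl, ?_⟩
  rw [LinearPMap.map_smul, heig, smul_smul, mul_comm]

theorem LinearPMap.IsClosed.exists_apply_add_smul_eq_of_eigenbasis [CompleteSpace E]
    {A : E →ₗ.[𝕜] E} (hA : A.IsClosed) (b : HilbertBasis ι 𝕜 E) (hb : ∀ i, b i ∈ A.domain)
    (μ : ι → 𝕜) (heig : ∀ i, A ⟨b i, hb i⟩ = μ i • b i) {σ : 𝕜} {c : ℝ} (hc : 0 < c)
    (hσ : ∀ i, c ≤ ‖μ i + σ‖) (η : E) : ∃ ψ : A.domain, A ψ + σ • (ψ : E) = η := by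
  set r : ι → 𝕜 := fun i => (μ i + σ)⁻¹
  have hinv : ∀ i, (μ i + σ) * r i = 1 := fun i =>
    mul_inv_cancel₀ (norm_pos_iff.1 (hc.trans_le (hσ i)))
  have hr : ∀ i, ‖r i‖ ≤ c⁻¹ := fun i => by
    rw [norm_inv]; exact inv_anti₀ hc (hσ i)
  have hμr : ∀ i, ‖μ i * r i‖ ≤ 1 + ‖σ‖ * c⁻¹ := fun i => by
    have : μ i * r i = 1 - σ * r i := by linear_combination hinv i
    rw [this]
    calc ‖1 - σ * r i‖ ≤ ‖(1 : 𝕜)‖ + ‖σ * r i‖ := norm_sub_le _ _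
      _ ≤ 1 + ‖σ‖ * c⁻¹ := by rw [norm_one, norm_mul]; gcongr; exact hr i
  obtain ⟨x, hx⟩ := b.summable_mul_repr_smul η hr
  obtain ⟨y, hy⟩ := b.summable_mul_repr_smul η hμr
  have hxy : (x, y) ∈ A.graph := hA.mem_graph_of_hasSum
    (fun i => by simpa only [mul_assoc] using A.mem_graph_of_eigenbasis b hb μ heig _ i) hx hy
  obtain ⟨ψ, rfl, hψ⟩ := (LinearPMap.mem_graph_iff A).1 hxy
  refine ⟨ψ, hψ ▸ (hy.add (hx.const_smul σ)).unique ?_⟩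
  convert b.hasSum_repr η using 2 with i
  rw [smul_smul, ← add_smul]
  congr 1
  linear_combination b.repr η i * hinv i

end HilbertBasis

theorem range_add_i_eq_top_of_eigenbasis_general
    {H : Type*} [NormedAddCommGroup H] [InnerProductSpace ℂ H] [CompleteSpace H]
    (A : H →ₗ.[ℂ] H)
    (hclosed : A.IsClosed)
    (b : HilbertBasis ℕ ℂ H) (hb : ∀ n, b n ∈ A.domain)
    (lam : ℕ → ℝ)
    (heig : ∀ n, A ⟨b n, hb n⟩ = (lam n : ℂ) • b n) :
    (∀ η : H, ∃ ψ : A.domain, A ψ + Complex.I • (ψ : H) = η) ∧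
    (∀ η : H, ∃ ψ : A.domain, A ψ - Complex.I • (ψ : H) = η) := by
  refine ⟨hclosed.exists_apply_add_smul_eq_of_eigenbasis b hb _ heig one_pos fun n => ?_,
    fun η => ?_⟩
  · simpa using Complex.abs_im_le_norm ((lam n : ℂ) + Complex.I)
  · simp_rw [sub_eq_add_neg, ← neg_smul]
    refine hclosed.exists_apply_add_smul_eq_of_eigenbasis b hb _ heig one_pos (fun n => ?_) η
    simpa using Complex.abs_im_le_norm ((lam n : ℂ) + -Complex.I)

/-- For a closed, densely defined hermitian operator `A` on a complex separable Hilbert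
space whose domain contains an orthonormal basis of eigenvectors (with real eigenvalues),
the range of `A + i·𝟙` is all of `H`. -/
theorem range_add_i_eq_top_of_eigenbasis
    {H : Type*} [NormedAddCommGroup H] [InnerProductSpace ℂ H] [CompleteSpace H]
    (A : H →ₗ.[ℂ] H)
    (hdense : Dense (A.domain : Set H))
    (hclosed : A.IsClosed)
    (hsymm : ∀ ψ φ : A.domain, ⟪(ψ : H), A φ⟫_ℂ = ⟪A ψ, (φ : H)⟫_ℂ)
    (b : HilbertBasis ℕ ℂ H) (hb : ∀ n, b n ∈ A.domain)
    (lam : ℕ → ℝ)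
    (heig : ∀ n, A ⟨b n, hb n⟩ = (lam n : ℂ) • b n) :
    (∀ η : H, ∃ ψ : A.domain, A ψ + Complex.I • (ψ : H) = η) ∧
    (∀ η : H, ∃ ψ : A.domain, A ψ - Complex.I • (ψ : H) = η) :=
  range_add_i_eq_top_of_eigenbasis_general A hclosed b hb lam heig
end
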